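/- Let x_{i−1} < x_i < x_{i+1} and define the Brodlie value ḟ_i^{B} = (wl_i + wr_i)·m_{i−1}·m_i/(wl_i·m_i + wr_i·m_{i−1}) when m_{i−1}·m_i > 0, where wl_i = h_{i−1} + 2·h_i and wr_i = 2·h_{i−1} + h_i. Suppose f is three times continuously differentiable on [x_{i−1}, x_{i+1}], there is δ > 0 with f'(x) ≥ δ for all x ∈ [x_{i−1}, x_{i+1}] (or f'(x) ≤ −δ for all such x), with m_{i−1}, m_i the divided differences of f (so that m_{i−1}·m_i > 0). Then there exists a constant C, depending only on δ and on bounds for |f''| and |f'''| on [x_{i−1}, x_{i+1}], such that: if h_{i−1} = h_i = h then |ḟ_i^{B} − f'(x_i)| ≤ C·h², while in general |ḟ_i^{B} − f'(x_i)| ≤ C·max(h_{i−1}, h_i). -/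

import Mathlib

/-- Brodlie's derivative value: `ḟᵢ^B = (wl + wr)·mᵢ₋₁·mᵢ/(wl·mᵢ + wr·mᵢ₋₁)`
with `wl = hᵢ₋₁ + 2hᵢ`, `wr = 2hᵢ₋₁ + hᵢ`. -/
noncomputable def brodlie (hm hi mm mi : ℝ) : ℝ :=
  ((hm + 2 * hi) + (2 * hm + hi)) * mm * mi / ((hm + 2 * hi) * mi + (2 * hm + hi) * mm)

/-!
Brodlie's value is a weighted harmonic mean of the two divided differences `m₋, m₊`, so it lies
between them; by Taylor's theorem each of them is within `M h / 2` of `f'(xᵢ)`, which gives the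
first-order bound. For equal spacings it is the plain harmonic mean, which falls short of the
arithmetic mean by `(m₋ - m₊)² / (2 (m₋ + m₊))`. The arithmetic mean is a second-order
approximation of `f'(xᵢ)` because the `f''(xᵢ)` terms of the two Taylor expansions cancel,
`(m₋ - m₊)² = O(h²)`, and `|m₋ + m₊| ≥ 2δ` since by the mean value theorem both divided
differences are values of `f'`.
-/

open Set Nat

theorem iteratedDerivWithin_subset {𝕜 F : Type*} [NontriviallyNormedField 𝕜]
    [NormedAddCommGroup F] [NormedSpace 𝕜 F] {f : 𝕜 → F} {s t : Set 𝕜} {x : 𝕜} {n : ℕ}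
    (st : s ⊆ t) (hs : UniqueDiffOn 𝕜 s) (ht : UniqueDiffOn 𝕜 t) (h : ContDiffOn 𝕜 n f t)
    (hx : x ∈ s) : iteratedDerivWithin n f s x = iteratedDerivWithin n f t x := by
  simp only [iteratedDerivWithin_eq_iteratedFDerivWithin,
    iteratedFDerivWithin_subset st hs ht h hx]

theorem taylorWithinEval_subset {E : Type*} [NormedAddCommGroup E] [NormedSpace ℝ E]
    {f : ℝ → E} {s t : Set ℝ} {x₀ : ℝ} {n : ℕ} (st : s ⊆ t) (hs : UniqueDiffOn ℝ s)
    (ht : UniqueDiffOn ℝ t) (h : ContDiffOn ℝ n f t) (hx₀ : x₀ ∈ s) (x : ℝ) :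
    taylorWithinEval f n s x₀ x = taylorWithinEval f n t x₀ x := by
  simp only [taylor_within_apply]
  refine Finset.sum_congr rfl fun k hk => ?_
  have hkn : (k : WithTop ℕ∞) ≤ n := by
    exact_mod_cast Nat.lt_succ_iff.mp (Finset.mem_range.mp hk)
  rw [iteratedDerivWithin_subset st hs ht (h.of_le hkn) hx₀]

theorem taylorWithinEval_one (f : ℝ → ℝ) (s : Set ℝ) (x₀ x : ℝ) :
    taylorWithinEval f 1 s x₀ x = f x₀ + derivWithin f s x₀ * (x - x₀) := by
  simp [taylorWithinEval_succ, taylor_within_zero_eval, mul_comm]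

theorem taylorWithinEval_two (f : ℝ → ℝ) (s : Set ℝ) (x₀ x : ℝ) :
    taylorWithinEval f 2 s x₀ x = f x₀ + derivWithin f s x₀ * (x - x₀)
      + iteratedDerivWithin 2 f s x₀ * (x - x₀) ^ 2 / 2 := by
  rw [taylorWithinEval_succ, taylorWithinEval_one]
  norm_num
  ring

section TaylorOnInterval

variable {f : ℝ → ℝ} {a b x₀ x M : ℝ}

/-- Unlike in `taylor_mean_remainder_lagrange`, the derivatives are taken within the whole
interval `Icc a b` rather than within `uIcc x₀ x`. -/
theorem taylor_mean_remainder_lagrange_Icc {n : ℕ} (hf : ContDiffOn ℝ (n + 1) f (Icc a b))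
    (hx₀ : x₀ ∈ Icc a b) (hx : x ∈ Icc a b) (hne : x₀ ≠ x) :
    ∃ ξ ∈ Icc a b, f x - taylorWithinEval f n (Icc a b) x₀ x =
      iteratedDerivWithin (n + 1) f (Icc a b) ξ * (x - x₀) ^ (n + 1) / (n + 1)! := by
  have hab : a < b := by
    by_contra! hba
    exact hne (by linarith [hx₀.1, hx₀.2, hx.1, hx.2])
  have hsub : uIcc x₀ x ⊆ Icc a b := uIcc_subset_Icc hx₀ hx
  obtain ⟨ξ, hξ, hrem⟩ := taylor_mean_remainder_lagrange_iteratedDeriv hne (hf.mono hsub)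
  have hξ' : ξ ∈ Ioo a b := Ioo_subset_Ioo (le_min hx₀.1 hx.1) (max_le hx₀.2 hx.2) hξ
  refine ⟨ξ, Ioo_subset_Icc_self hξ', ?_⟩
  rw [← taylorWithinEval_subset hsub (uniqueDiffOn_uIcc hne) (uniqueDiffOn_Icc hab) hf.of_succ
    left_mem_uIcc, hrem, iteratedDerivWithin_eq_iteratedDeriv (uniqueDiffOn_Icc hab)
    (hf.contDiffAt (Icc_mem_nhds hξ'.1 hξ'.2)) (Ioo_subset_Icc_self hξ')]

theorem abs_sub_taylorWithinEval_le {n : ℕ} (hf : ContDiffOn ℝ (n + 1) f (Icc a b))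
    (hx₀ : x₀ ∈ Icc a b) (hx : x ∈ Icc a b)
    (hM : ∀ t ∈ Icc a b, |iteratedDerivWithin (n + 1) f (Icc a b) t| ≤ M) :
    |f x - taylorWithinEval f n (Icc a b) x₀ x| ≤ M * |x - x₀| ^ (n + 1) / (n + 1)! := by
  rcases eq_or_ne x₀ x with rfl | hne
  · simp [taylorWithinEval_self]
  obtain ⟨ξ, hξ, hrem⟩ := taylor_mean_remainder_lagrange_Icc hf hx₀ hx hne
  rw [hrem, abs_div, abs_mul, abs_pow, Nat.abs_cast]
  gcongr
  exact hM ξ hξ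

theorem exists_slope_eq_derivWithin_Icc (hf : ContDiffOn ℝ 1 f (Icc a b))
    (hx₀ : x₀ ∈ Icc a b) (hx : x ∈ Icc a b) (hne : x₀ ≠ x) :
    ∃ ξ ∈ Icc a b, slope f x₀ x = derivWithin f (Icc a b) ξ := by
  obtain ⟨ξ, hξ, hrem⟩ :=
    taylor_mean_remainder_lagrange_Icc (n := 0) (by simpa using hf) hx₀ hx hne
  refine ⟨ξ, hξ, ?_⟩
  simp only [taylor_within_zero_eval, zero_add, iteratedDerivWithin_one, pow_one, factorial_one,
    cast_one, div_one] at hrem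
  rw [slope_def_field, hrem, mul_div_cancel_right₀ _ (sub_ne_zero.mpr hne.symm)]

theorem slopes_same_sign_of_derivWithin {y δ : ℝ} (hf : ContDiffOn ℝ 1 f (Icc a b))
    (hx₀ : x₀ ∈ Icc a b) (hx : x ∈ Icc a b) (hy : y ∈ Icc a b)
    (hx₀x : x₀ ≠ x) (hx₀y : x₀ ≠ y)
    (hsign : (∀ t ∈ Icc a b, δ ≤ derivWithin f (Icc a b) t) ∨
      (∀ t ∈ Icc a b, derivWithin f (Icc a b) t ≤ -δ)) :
    (δ ≤ slope f x₀ x ∧ δ ≤ slope f x₀ y) ∨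
      (slope f x₀ x ≤ -δ ∧ slope f x₀ y ≤ -δ) := by
  obtain ⟨ξ, hξ, hslope_x⟩ := exists_slope_eq_derivWithin_Icc hf hx₀ hx hx₀x
  obtain ⟨η, hη, hslope_y⟩ := exists_slope_eq_derivWithin_Icc hf hx₀ hy hx₀y
  rw [hslope_x, hslope_y]
  exact hsign.imp (fun h => ⟨h ξ hξ, h η hη⟩) (fun h => ⟨h ξ hξ, h η hη⟩)

theorem abs_slope_sub_le {n : ℕ} (hf : ContDiffOn ℝ (n + 1) f (Icc a b))
    (hx₀ : x₀ ∈ Icc a b) (hx : x ∈ Icc a b) (hne : x₀ ≠ x)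
    (hM : ∀ t ∈ Icc a b, |iteratedDerivWithin (n + 1) f (Icc a b) t| ≤ M) :
    |slope f x₀ x - (taylorWithinEval f n (Icc a b) x₀ x - f x₀) / (x - x₀)|
      ≤ M * |x - x₀| ^ n / (n + 1)! := by
  have hpos : 0 < |x - x₀| := abs_pos.mpr (sub_ne_zero.mpr hne.symm)
  have key : slope f x₀ x - (taylorWithinEval f n (Icc a b) x₀ x - f x₀) / (x - x₀)
      = (f x - taylorWithinEval f n (Icc a b) x₀ x) / (x - x₀) := by
    rw [slope_def_field]; ring
  rw [key, abs_div, div_le_iff₀ hpos]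
  calc _ ≤ M * |x - x₀| ^ (n + 1) / (n + 1)! := abs_sub_taylorWithinEval_le hf hx₀ hx hM
    _ = _ := by ring

theorem abs_slope_sub_derivWithin_le (hf : ContDiffOn ℝ 2 f (Icc a b))
    (hx₀ : x₀ ∈ Icc a b) (hx : x ∈ Icc a b) (hne : x₀ ≠ x)
    (hM : ∀ t ∈ Icc a b, |iteratedDerivWithin 2 f (Icc a b) t| ≤ M) :
    |slope f x₀ x - derivWithin f (Icc a b) x₀| ≤ M * |x - x₀| / 2 := by
  have h := abs_slope_sub_le (n := 1) hf hx₀ hx hne hM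
  rwa [taylorWithinEval_one, add_sub_cancel_left, mul_div_cancel_right₀ _
    (sub_ne_zero.mpr hne.symm), pow_one] at h

theorem abs_slope_sub_derivWithin_sub_le (hf : ContDiffOn ℝ 3 f (Icc a b))
    (hx₀ : x₀ ∈ Icc a b) (hx : x ∈ Icc a b) (hne : x₀ ≠ x)
    (hM : ∀ t ∈ Icc a b, |iteratedDerivWithin 3 f (Icc a b) t| ≤ M) :
    |slope f x₀ x - derivWithin f (Icc a b) x₀
        - iteratedDerivWithin 2 f (Icc a b) x₀ * (x - x₀) / 2| ≤ M * (x - x₀) ^ 2 / 6 := by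
  have h := abs_slope_sub_le (n := 2) hf hx₀ hx hne hM
  rw [taylorWithinEval_two, sq_abs] at h
  have hx₀x : x - x₀ ≠ 0 := sub_ne_zero.mpr hne.symm
  calc _ = |slope f x₀ x - (f x₀ + derivWithin f (Icc a b) x₀ * (x - x₀)
          + iteratedDerivWithin 2 f (Icc a b) x₀ * (x - x₀) ^ 2 / 2 - f x₀) / (x - x₀)| := by
        congr 1; field_simp; ring
    _ ≤ _ := h.trans_eq (by norm_num [factorial])

end TaylorOnInterval

section BrodlieAlgebra

variable {h k mm mi : ℝ}

theorem brodlie_mem_uIcc (hh : 0 < h) (hk : 0 < k) (hm : 0 < mm * mi) :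
    brodlie h k mm mi ∈ uIcc mm mi := by
  have hD : (h + 2 * k) * mi + (2 * h + k) * mm ≠ 0 := by
    refine left_ne_zero_of_mul (b := mm) (ne_of_gt ?_)
    calc 0 < (h + 2 * k) * (mm * mi) + (2 * h + k) * mm ^ 2 := by positivity
      _ = _ := by ring
  have hprod : (brodlie h k mm mi - mm) * (brodlie h k mm mi - mi) =
      -((h + 2 * k) * (2 * h + k) * (mm * mi) * (mi - mm) ^ 2 /
        ((h + 2 * k) * mi + (2 * h + k) * mm) ^ 2) := by
    rw [brodlie]
    set D := (h + 2 * k) * mi + (2 * h + k) * mm with hD_def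
    field_simp
    rw [hD_def]
    ring
  have hprod_nonpos : (brodlie h k mm mi - mm) * (brodlie h k mm mi - mi) ≤ 0 := by
    rw [hprod, neg_nonpos]; positivity
  rcases le_total mm mi with hle | hle
  · rw [uIcc_of_le hle]; constructor <;> nlinarith
  · rw [uIcc_of_ge hle]; constructor <;> nlinarith

theorem abs_brodlie_sub_le_max (hh : 0 < h) (hk : 0 < k) (hm : 0 < mm * mi) (d : ℝ) :
    |brodlie h k mm mi - d| ≤ max |mm - d| |mi - d| := by
  rcases mem_uIcc.mp (brodlie_mem_uIcc hh hk hm) with ⟨h1, h2⟩ | ⟨h1, h2⟩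
  · exact abs_le_max_abs_abs (by linarith) (by linarith)
  · rw [max_comm]; exact abs_le_max_abs_abs (by linarith) (by linarith)

theorem brodlie_self_sub (hh : h ≠ 0) (hm : mm + mi ≠ 0) (d : ℝ) :
    brodlie h h mm mi - d = ((mm + mi) / 2 - d) - (mm - mi) ^ 2 / (2 * (mm + mi)) := by
  have hD : (h + 2 * h) * mi + (2 * h + h) * mm = 3 * h * (mm + mi) := by ring
  rw [brodlie, hD]
  field_simp
  ring

theorem abs_brodlie_self_sub_le {δ : ℝ} (hh : h ≠ 0) (hδ : 0 < δ) (hm : 2 * δ ≤ |mm + mi|)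
    (d : ℝ) : |brodlie h h mm mi - d| ≤ |(mm + mi) / 2 - d| + (mm - mi) ^ 2 / (4 * δ) := by
  have hm0 : mm + mi ≠ 0 := abs_pos.mp (by linarith)
  rw [brodlie_self_sub hh hm0]
  calc _ ≤ |(mm + mi) / 2 - d| + |(mm - mi) ^ 2 / (2 * (mm + mi))| := abs_sub _ _
    _ ≤ _ := by
      gcongr
      rw [abs_div, abs_mul, abs_two, abs_sq]
      exact div_le_div_of_nonneg_left (sq_nonneg _) (by positivity) (by linarith)

end BrodlieAlgebra

section BrodlieAccuracy

variable {f : ℝ → ℝ} {xm xi xp M : ℝ}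

theorem abs_brodlie_slope_sub_derivWithin_le (hm : xm < xi) (hp : xi < xp)
    (hf : ContDiffOn ℝ 2 f (Icc xm xp)) (hprod : 0 < slope f xi xm * slope f xi xp)
    (hf₂ : ∀ t ∈ Icc xm xp, |iteratedDerivWithin 2 f (Icc xm xp) t| ≤ M) :
    |brodlie (xi - xm) (xp - xi) (slope f xi xm) (slope f xi xp) - derivWithin f (Icc xm xp) xi|
      ≤ M / 2 * max (xi - xm) (xp - xi) := by
  have hxi : xi ∈ Icc xm xp := ⟨hm.le, hp.le⟩
  have hM : 0 ≤ M := (abs_nonneg _).trans (hf₂ xi hxi)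
  have hem : |slope f xi xm - derivWithin f (Icc xm xp) xi| ≤ M / 2 * (xi - xm) := by
    have h := abs_slope_sub_derivWithin_le hf hxi (left_mem_Icc.2 (hm.trans hp).le) hm.ne' hf₂
    rwa [abs_sub_comm xm, abs_of_pos (sub_pos.2 hm), mul_div_right_comm] at h
  have hep : |slope f xi xp - derivWithin f (Icc xm xp) xi| ≤ M / 2 * (xp - xi) := by
    have h := abs_slope_sub_derivWithin_le hf hxi (right_mem_Icc.2 (hm.trans hp).le) hp.ne hf₂
    rwa [abs_of_pos (sub_pos.2 hp), mul_div_right_comm] at h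
  calc _ ≤ _ := abs_brodlie_sub_le_max (sub_pos.2 hm) (sub_pos.2 hp) hprod _
    _ ≤ M / 2 * max (xi - xm) (xp - xi) := by
      rw [mul_max_of_nonneg _ _ (by positivity)]
      exact max_le_max hem hep

theorem abs_brodlie_slope_sub_derivWithin_le_sq {δ : ℝ} (hm : xm < xi) (hp : xi < xp)
    (heq : xi - xm = xp - xi) (hf : ContDiffOn ℝ 3 f (Icc xm xp)) (hδ : 0 < δ)
    (hsum : 2 * δ ≤ |slope f xi xm + slope f xi xp|)
    (hf₂ : ∀ t ∈ Icc xm xp, |iteratedDerivWithin 2 f (Icc xm xp) t| ≤ M)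
    (hf₃ : ∀ t ∈ Icc xm xp, |iteratedDerivWithin 3 f (Icc xm xp) t| ≤ M) :
    |brodlie (xp - xi) (xp - xi) (slope f xi xm) (slope f xi xp) - derivWithin f (Icc xm xp) xi|
      ≤ (M / 6 + M ^ 2 / (4 * δ)) * (xp - xi) ^ 2 := by
  have hxi : xi ∈ Icc xm xp := ⟨hm.le, hp.le⟩
  have hxm : xm ∈ Icc xm xp := left_mem_Icc.2 (hm.trans hp).le
  have hxp : xp ∈ Icc xm xp := right_mem_Icc.2 (hm.trans hp).le
  set mm := slope f xi xm
  set mi := slope f xi xp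
  set d := derivWithin f (Icc xm xp) xi
  set c := iteratedDerivWithin 2 f (Icc xm xp) xi
  set h := xp - xi
  have hxm_sub : xm - xi = -h := by linarith
  have hsm : |mm - d + c * h / 2| ≤ M * h ^ 2 / 6 := by
    have h' := abs_slope_sub_derivWithin_sub_le hf hxi hxm hm.ne' hf₃
    rwa [hxm_sub, neg_sq, mul_neg, neg_div, sub_neg_eq_add] at h'
  have hsp : |mi - d - c * h / 2| ≤ M * h ^ 2 / 6 :=
    abs_slope_sub_derivWithin_sub_le hf hxi hxp hp.ne hf₃
  have hmean : |(mm + mi) / 2 - d| ≤ M * h ^ 2 / 6 := by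
    obtain ⟨h1, h2⟩ := abs_le.mp hsm
    obtain ⟨h3, h4⟩ := abs_le.mp hsp
    exact abs_le.mpr ⟨by linarith, by linarith⟩
  have hdiff : (mm - mi) ^ 2 ≤ (M * h) ^ 2 := by
    have hem := abs_slope_sub_derivWithin_le (hf.of_le (by norm_num)) hxi hxm hm.ne' hf₂
    have hep := abs_slope_sub_derivWithin_le (hf.of_le (by norm_num)) hxi hxp hp.ne hf₂
    rw [hxm_sub, abs_neg, abs_of_pos (sub_pos.2 hp)] at hem
    rw [abs_of_pos (sub_pos.2 hp)] at hep
    rw [← sq_abs]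
    refine pow_le_pow_left₀ (abs_nonneg _) ?_ 2
    calc |mm - mi| ≤ |mm - d| + |d - mi| := abs_sub_le mm d mi
      _ ≤ M * h := by rw [abs_sub_comm d]; linarith
  calc _ ≤ |(mm + mi) / 2 - d| + (mm - mi) ^ 2 / (4 * δ) :=
        abs_brodlie_self_sub_le (sub_pos.2 hp).ne' hδ hsum d
    _ ≤ M * h ^ 2 / 6 + (M * h) ^ 2 / (4 * δ) := by gcongr
    _ = _ := by ring

end BrodlieAccuracy

/-- Accuracy of Brodlie's formula: for `f ∈ C³` with `f'` bounded away from
zero (so the divided differences have a common sign) there is a constant `C`,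
depending only on `δ` and on the bounds `M` for `|f''|` and `|f'''|`, such
that Brodlie's value is second-order accurate on uniform spacings
(`hᵢ₋₁ = hᵢ`) and first-order accurate in general. -/
theorem brodlie_accuracy (δ M : ℝ) (hδ : 0 < δ) (hM : 0 ≤ M) :
    ∃ C > 0, ∀ (xm xi xp : ℝ) (f : ℝ → ℝ),
      xm < xi → xi < xp →
      ContDiffOn ℝ 3 f (Set.Icc xm xp) →
      ((∀ t ∈ Set.Icc xm xp, δ ≤ derivWithin f (Set.Icc xm xp) t) ∨
        (∀ t ∈ Set.Icc xm xp, derivWithin f (Set.Icc xm xp) t ≤ -δ)) →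
      (∀ t ∈ Set.Icc xm xp, |iteratedDerivWithin 2 f (Set.Icc xm xp) t| ≤ M) →
      (∀ t ∈ Set.Icc xm xp, |iteratedDerivWithin 3 f (Set.Icc xm xp) t| ≤ M) →
      (|brodlie (xi - xm) (xp - xi) ((f xi - f xm) / (xi - xm))
          ((f xp - f xi) / (xp - xi)) - derivWithin f (Set.Icc xm xp) xi|
        ≤ C * max (xi - xm) (xp - xi)) ∧
      (xi - xm = xp - xi →
        |brodlie (xi - xm) (xp - xi) ((f xi - f xm) / (xi - xm))
            ((f xp - f xi) / (xp - xi)) - derivWithin f (Set.Icc xm xp) xi|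
          ≤ C * (xp - xi) ^ 2) := by
  refine ⟨M / 2 + M ^ 2 / (4 * δ) + 1, by positivity, ?_⟩
  intro xm xi xp f hm hp hf hsign hf₂ hf₃
  have hsame := slopes_same_sign_of_derivWithin (hf.of_le (by norm_num)) ⟨hm.le, hp.le⟩
    (left_mem_Icc.2 (hm.trans hp).le) (right_mem_Icc.2 (hm.trans hp).le) hm.ne' hp.ne hsign
  rw [← slope_def_field, ← slope_def_field, slope_comm f xm]
  refine ⟨?_, fun heq => ?_⟩
  · have hprod : 0 < slope f xi xm * slope f xi xp := by
      rcases hsame with ⟨h1, h2⟩ | ⟨h1, h2⟩ <;> nlinarith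
    calc _ ≤ M / 2 * max (xi - xm) (xp - xi) :=
          abs_brodlie_slope_sub_derivWithin_le hm hp (hf.of_le (by norm_num)) hprod hf₂
      _ ≤ _ := by gcongr; linarith [show 0 ≤ M ^ 2 / (4 * δ) by positivity]
  · have hsum : 2 * δ ≤ |slope f xi xm + slope f xi xp| := by
      rcases hsame with ⟨h1, h2⟩ | ⟨h1, h2⟩ <;>
        cases abs_cases (slope f xi xm + slope f xi xp) <;> linarith
    rw [heq]
    calc _ ≤ (M / 6 + M ^ 2 / (4 * δ)) * (xp - xi) ^ 2 :=
          abs_brodlie_slope_sub_derivWithin_le_sq hm hp heq hf hδ hsum hf₂ hf₃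
      _ ≤ _ := by gcongr ?_ * _; linarith
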